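/- Let A = (a_{ij}) be an n×n irreducible matrix with nonnegative integer entries and all row sums nonzero, let r ≥ 1 and k ≥ 0 be integers, and suppose there is a map m from {1,…,n} to the integers modulo r such that a_{ij} > 0 implies m(j) ≡ m(i) + 1 (mod r). If there exist positive constants c_1,…,c_r such that r_i(A^{k+1}) / r_i(A^k) = c_{m(i)} for every i ∈ {1,…,n}, then ρ(A)^r is a nonnegative integer. -/

import Mathlib

/-!
The row sums `v i = r_i(A^k)` are positive, and since every edge of `A` raises `m` by one, the
ratio condition propagates: `r_i(A^(k+s)) = (∏_{t<s} c_{m(i)+t}) r_i(A^k)`. After a full period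
the product runs over all of `ℤ/rℤ`, so `A^r v = C v` with `C = ∏_ℓ c_ℓ`. A nonnegative matrix
with a positive eigenvector has the corresponding eigenvalue as its spectral radius, hence
`ρ(A)^r = ρ(A^r) = C` by spectral mapping. Finally `C^s r_i(A^k) = r_i(A^(rs+k))` is an integer
for every `s`, so the denominators of the rational number `C^s` stay bounded, forcing `C ∈ ℕ`.
-/

open Matrix

/-- The spectral radius of a real square matrix: the maximum modulus of its
complex eigenvalues (elements of the spectrum of the matrix over `ℂ`). -/
noncomputable def specRad {n : ℕ} (A : Matrix (Fin n) (Fin n) ℝ) : ℝ :=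
  sSup ((fun μ : ℂ => ‖μ‖) '' spectrum ℂ (A.map (fun x : ℝ => (x : ℂ))))

/-- `rowSum A i` is the `i`-th row sum of `A`. -/
noncomputable def rowSum {n : ℕ} (A : Matrix (Fin n) (Fin n) ℝ) (i : Fin n) : ℝ :=
  ∑ j, A i j

/-- A square matrix is irreducible if it cannot be symmetrically permuted to a
nontrivial block upper-triangular form; equivalently, for every nonempty proper
subset `S` of indices there is a nonzero entry leading from `S` to its complement. -/
def IsIrred {n : ℕ} (A : Matrix (Fin n) (Fin n) ℝ) : Prop :=
  ∀ S : Set (Fin n), S.Nonempty → S ≠ Set.univ → ∃ i ∈ S, ∃ j ∈ Sᶜ, A i j ≠ 0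

open Finset

theorem Matrix.mem_spectrum_iff_exists_mulVec_eq_smul {ι K : Type*} [Fintype ι] [DecidableEq ι]
    [Field K] (M : Matrix ι ι K) (μ : K) :
    μ ∈ spectrum K M ↔ ∃ w ≠ 0, M *ᵥ w = μ • w := by
  rw [← Matrix.spectrum_toLin', ← Module.End.hasEigenvalue_iff_mem_spectrum,
    Module.End.hasEigenvalue_iff, Submodule.ne_bot_iff]
  simp only [Module.End.mem_eigenspace_iff, Matrix.toLin'_apply]
  exact ⟨fun ⟨w, hw, h0⟩ => ⟨w, h0, hw⟩, fun ⟨w, h0, hw⟩ => ⟨w, hw, h0⟩⟩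

theorem Matrix.pow_mulVec_of_mulVec_eq_smul {ι R : Type*} [Fintype ι] [DecidableEq ι]
    [CommSemiring R] {B : Matrix ι ι R} {v : ι → R} {C : R} (h : B *ᵥ v = C • v) (s : ℕ) :
    B ^ s *ᵥ v = C ^ s • v := by
  induction s with
  | zero => simp
  | succ s ih => rw [pow_succ, ← mulVec_mulVec, h, mulVec_smul, ih, smul_smul, pow_succ']

section Perron

variable {ι : Type*} [Fintype ι] [DecidableEq ι] {B : Matrix ι ι ℝ} {v : ι → ℝ} {C : ℝ}

theorem Matrix.ofReal_mem_spectrum_map_of_mulVec_eq_smul (hv : v ≠ 0) (h : B *ᵥ v = C • v) :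
    (C : ℂ) ∈ spectrum ℂ (B.map (fun x : ℝ => (x : ℂ))) := by
  rw [mem_spectrum_iff_exists_mulVec_eq_smul]
  refine ⟨fun i => v i, fun h0 => hv (funext fun i => by simpa using congrFun h0 i), ?_⟩
  funext i
  simpa [mulVec, dotProduct] using congrArg (fun u : ι → ℝ => (u i : ℂ)) h

theorem Matrix.norm_le_of_mem_spectrum_map_of_mulVec_eq_smul (hB : ∀ i j, 0 ≤ B i j)
    (hv : ∀ i, 0 < v i) (h : B *ᵥ v = C • v) {μ : ℂ}
    (hμ : μ ∈ spectrum ℂ (B.map (fun x : ℝ => (x : ℂ)))) : ‖μ‖ ≤ C := by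
  obtain ⟨w, hw0, hw⟩ := (mem_spectrum_iff_exists_mulVec_eq_smul _ _).mp hμ
  obtain ⟨j₀, hj₀⟩ := Function.ne_iff.mp hw0
  -- Compare `w` with `t • v`, where `t = ‖w i₀‖ / v i₀` is the largest ratio `‖w i‖ / v i`.
  obtain ⟨i₀, -, hi₀⟩ := exists_max_image univ (fun i => ‖w i‖ / v i) ⟨j₀, mem_univ _⟩
  set t := ‖w i₀‖ / v i₀
  have hbound : ∀ j, ‖w j‖ ≤ t * v j := fun j =>
    (div_le_iff₀ (hv j)).mp (hi₀ j (mem_univ _))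
  have ht : 0 < t := (div_pos (norm_pos_iff.mpr hj₀) (hv j₀)).trans_le (hi₀ j₀ (mem_univ _))
  have hrow : ∑ j, B i₀ j * v j = C * v i₀ := by simpa [mulVec, dotProduct] using congrFun h i₀
  have hμw : μ * w i₀ = ∑ j, (B i₀ j : ℂ) * w j := by
    simpa [mulVec, dotProduct] using (congrFun hw i₀).symm
  have key : ‖μ‖ * (t * v i₀) ≤ C * (t * v i₀) :=
    calc ‖μ‖ * (t * v i₀) = ‖∑ j, (B i₀ j : ℂ) * w j‖ := by
          rw [← hμw, norm_mul, div_mul_cancel₀ _ (hv i₀).ne']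
      _ ≤ ∑ j, B i₀ j * ‖w j‖ := by
          refine (norm_sum_le _ _).trans_eq (sum_congr rfl fun j _ => ?_)
          rw [norm_mul, Complex.norm_real, Real.norm_of_nonneg (hB i₀ j)]
      _ ≤ ∑ j, B i₀ j * (t * v j) :=
          sum_le_sum fun j _ => mul_le_mul_of_nonneg_left (hbound j) (hB i₀ j)
      _ = C * (t * v i₀) := by
          simp_rw [mul_left_comm _ t, ← mul_sum, hrow]
  exact le_of_mul_le_mul_right key (mul_pos ht (hv i₀))

theorem Matrix.isGreatest_norm_spectrum_map_of_mulVec_eq_smul [Nonempty ι]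
    (hB : ∀ i j, 0 ≤ B i j) (hv : ∀ i, 0 < v i) (h : B *ᵥ v = C • v) :
    IsGreatest ((fun μ : ℂ => ‖μ‖) '' spectrum ℂ (B.map (fun x : ℝ => (x : ℂ)))) C := by
  have hC := ofReal_mem_spectrum_map_of_mulVec_eq_smul
    (Function.ne_iff.mpr ⟨Classical.arbitrary ι, (hv _).ne'⟩) h
  have hbound : ∀ μ ∈ spectrum ℂ (B.map (fun x : ℝ => (x : ℂ))), ‖μ‖ ≤ C :=
    fun μ hμ => norm_le_of_mem_spectrum_map_of_mulVec_eq_smul hB hv h hμ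
  refine ⟨⟨C, hC, ?_⟩, fun _ ⟨μ, hμ, hμC⟩ => hμC ▸ hbound μ hμ⟩
  exact (Complex.norm_real C).trans (Real.norm_of_nonneg ((norm_nonneg _).trans (hbound C hC)))

end Perron

theorem specRad_pow_eq_of_isGreatest {n r : ℕ} (hr : r ≠ 0) (A : Matrix (Fin n) (Fin n) ℝ) {C : ℝ}
    (h : IsGreatest ((fun μ : ℂ => ‖μ‖) '' spectrum ℂ ((A ^ r).map (fun x : ℝ => (x : ℂ))))
      C) : specRad A ^ r = C := by
  rw [show (A ^ r).map (fun x : ℝ => (x : ℂ)) = _ from A.map_pow Complex.ofRealHom r,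
    spectrum.map_pow_of_pos _ (Nat.pos_of_ne_zero hr)] at h
  obtain ⟨_, ⟨ζ, hζ, rfl⟩, rfl⟩ := h.1
  have hζ_max :
      IsGreatest ((fun μ : ℂ => ‖μ‖) '' spectrum ℂ (A.map (fun x : ℝ => (x : ℂ)))) ‖ζ‖ := by
    refine ⟨⟨ζ, hζ, rfl⟩, ?_⟩
    rintro _ ⟨μ, hμ, rfl⟩
    refine (pow_le_pow_iff_left₀ (norm_nonneg μ) (norm_nonneg ζ) hr).mp ?_
    simpa only [norm_pow] using h.2 ⟨_, ⟨μ, hμ, rfl⟩, rfl⟩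
  rw [specRad, hζ_max.csSup_eq]
  exact (norm_pow ζ r).symm

theorem specRad_zero (A : Matrix (Fin 0) (Fin 0) ℝ) : specRad A = 0 := by
  rw [specRad, spectrum.of_subsingleton, Set.image_empty, Real.sSup_empty]

theorem ZMod.prod_range_natCast_add {M : Type*} [CommMonoid M] {r : ℕ} [NeZero r]
    (f : ZMod r → M) (x : ZMod r) : ∏ t ∈ range r, f (x + t) = ∏ ℓ, f ℓ :=
  prod_nbij' (x + ·) (fun ℓ => (ℓ - x).val) (by simp) (fun ℓ _ => by simpa using ZMod.val_lt _)
    (fun t ht => by simp [ZMod.val_natCast_of_lt (mem_range.mp ht)]) (by simp) (fun _ _ => rfl)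

theorem exists_nat_eq_of_forall_pow_mul_eq_natCast {x : ℝ} {q : ℕ} (hq : 0 < q)
    (h : ∀ s : ℕ, ∃ z : ℕ, x ^ s * q = z) : ∃ a : ℕ, x = a := by
  obtain ⟨p, hp⟩ := h 1
  set y : ℚ := p / q
  have hxy : x = y := by push_cast [y]; rw [← hp]; field_simp
  have hden : ∀ s, y.den ^ s ∣ q := by
    intro s
    obtain ⟨z, hz⟩ := h s
    have hys : y ^ s = Rat.divInt (z : ℤ) (q : ℤ) := by
      rw [Rat.divInt_eq_div]; push_cast
      apply Rat.cast_injective (α := ℝ)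
      push_cast
      rw [← hxy, ← hz]; field_simp
    exact_mod_cast Rat.den_pow y s ▸ hys ▸ Rat.den_dvd z q
  have hden1 : y.den = 1 := by
    by_contra hne
    have := Nat.le_of_dvd hq (hden q)
    have := Nat.lt_pow_self (n := q) (show 2 ≤ y.den by have := y.den_pos; omega)
    omega
  obtain ⟨a, ha⟩ :=
    Int.eq_ofNat_of_zero_le (Rat.num_nonneg.mpr (div_nonneg p.cast_nonneg q.cast_nonneg))
  refine ⟨a, ?_⟩
  rw [hxy, ← Rat.coe_int_num_of_den_eq_one hden1, ha]
  rfl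

section RowSum

variable {n : ℕ}

theorem mulVec_rowSum (A B : Matrix (Fin n) (Fin n) ℝ) : A *ᵥ rowSum B = rowSum (A * B) := by
  funext i
  simp only [mulVec, dotProduct, rowSum, mul_apply, mul_sum]
  exact sum_comm

variable {A : Matrix (Fin n) (Fin n) ℝ}

theorem rowSum_pow_pos (hA : ∀ i j, 0 ≤ A i j) (hr : ∀ i, rowSum A i ≠ 0) (s : ℕ) (i : Fin n) :
    0 < rowSum (A ^ s) i := by
  induction s generalizing i with
  | zero => simp [rowSum, one_apply]
  | succ s ih =>
    obtain ⟨j, -, hj⟩ := exists_ne_zero_of_sum_ne_zero (hr i)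
    rw [pow_succ', ← mulVec_rowSum]
    exact sum_pos' (fun l _ => mul_nonneg (hA i l) (ih l).le)
      ⟨j, mem_univ j, mul_pos ((hA i j).lt_of_ne' hj) (ih j)⟩

theorem exists_rowSum_pow_eq_natCast (hA : ∀ i j, ∃ z : ℕ, A i j = z) (s : ℕ) (i : Fin n) :
    ∃ z : ℕ, rowSum (A ^ s) i = z := by
  choose B hB using hA
  have hAB : A = (Matrix.of B).map (Nat.castRingHom ℝ) := Matrix.ext hB
  refine ⟨∑ j, (Matrix.of B ^ s) i j, ?_⟩
  rw [hAB, ← Matrix.map_pow]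
  simp [rowSum]

theorem exists_nat_eq_of_pow_mulVec_rowSum_eq_smul (hA : ∀ i j, ∃ z : ℕ, A i j = z) {k r : ℕ}
    {C : ℝ} {i : Fin n} (hi : 0 < rowSum (A ^ k) i)
    (h : A ^ r *ᵥ rowSum (A ^ k) = C • rowSum (A ^ k)) : ∃ a : ℕ, C = a := by
  obtain ⟨q, hq⟩ := exists_rowSum_pow_eq_natCast hA k i
  refine exists_nat_eq_of_forall_pow_mul_eq_natCast (q := q) (by exact_mod_cast hq ▸ hi)
    fun s => ?_
  obtain ⟨z, hz⟩ := exists_rowSum_pow_eq_natCast hA (r * s + k) i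
  refine ⟨z, ?_⟩
  rw [← hq, ← hz, pow_add, ← mulVec_rowSum, pow_mul, pow_mulVec_of_mulVec_eq_smul h]
  rfl

theorem rowSum_pow_add_eq_prod_mul {G : Type*} [AddCommMonoidWithOne G] {m : Fin n → G}
    (hm : ∀ i j, A i j ≠ 0 → m j = m i + 1) {c : G → ℝ} {k : ℕ}
    (hk : ∀ i, rowSum (A ^ (k + 1)) i = c (m i) * rowSum (A ^ k) i) (s : ℕ) (i : Fin n) :
    rowSum (A ^ (k + s)) i = (∏ t ∈ range s, c (m i + t)) * rowSum (A ^ k) i := by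
  induction s generalizing i with
  | zero => simp
  | succ s ih =>
    set P : G → ℝ := fun x => ∏ t ∈ range s, c (x + t)
    have hP : ∀ j, A i j * P (m j) = A i j * P (m i + 1) := fun j => by
      by_cases h : A i j = 0
      · simp [h]
      · rw [hm i j h]
    calc rowSum (A ^ (k + (s + 1))) i = ∑ j, A i j * (P (m j) * rowSum (A ^ k) j) := by
          rw [← add_assoc, pow_succ', ← mulVec_rowSum]
          simp only [mulVec, dotProduct, ih]
          rfl
      _ = P (m i + 1) * rowSum (A ^ (k + 1)) i := by
          simp_rw [← mul_assoc, hP, mul_right_comm _ (P _), ← sum_mul]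
          rw [pow_succ', ← mulVec_rowSum]
          exact mul_comm _ _
      _ = _ := by
          rw [hk, prod_range_succ', ← mul_assoc]
          simp only [P, Nat.cast_succ, Nat.cast_zero, add_zero, ← add_assoc,
            add_right_comm _ _ (1 : G)]

end RowSum

theorem stmt17_general {n r : ℕ} (A : Matrix (Fin n) (Fin n) ℝ)
    (hint : ∀ i j, ∃ z : ℕ, A i j = (z : ℝ))
    (hr : ∀ i, rowSum A i ≠ 0) (hr1 : 1 ≤ r) (k : ℕ)
    (m : Fin n → ZMod r) (hpart : ∀ i j, 0 < A i j → m j = m i + 1)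
    (c : ZMod r → ℝ)
    (hratio : ∀ i : Fin n, rowSum (A ^ (k + 1)) i / rowSum (A ^ k) i = c (m i)) :
    ∃ z : ℕ, specRad A ^ r = (z : ℝ) := by
  have : NeZero r := ⟨by omega⟩
  obtain rfl | hn := Nat.eq_zero_or_pos n
  · exact ⟨0, by rw [specRad_zero, zero_pow (NeZero.ne r), Nat.cast_zero]⟩
  obtain ⟨i₀⟩ : Nonempty (Fin n) := Fin.pos_iff_nonempty.mp hn
  have : Nonempty (Fin n) := ⟨i₀⟩
  have hA : ∀ i j, 0 ≤ A i j := fun i j => (hint i j).elim fun z hz => hz ▸ z.cast_nonneg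
  have hv : ∀ i, 0 < rowSum (A ^ k) i := rowSum_pow_pos hA hr k
  have hk : ∀ i, rowSum (A ^ (k + 1)) i = c (m i) * rowSum (A ^ k) i := fun i => by
    rw [← hratio i, div_mul_cancel₀ _ (hv i).ne']
  have hperiod : A ^ r *ᵥ rowSum (A ^ k) = (∏ ℓ, c ℓ) • rowSum (A ^ k) := by
    funext i
    rw [mulVec_rowSum, ← pow_add, add_comm,
      rowSum_pow_add_eq_prod_mul (fun i j h => hpart i j ((hA i j).lt_of_ne' h)) hk,
      ZMod.prod_range_natCast_add]
    rfl
  obtain ⟨a, ha⟩ := exists_nat_eq_of_pow_mulVec_rowSum_eq_smul hint (hv i₀) hperiod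
  refine ⟨a, ?_⟩
  rw [specRad_pow_eq_of_isGreatest (by omega) A
    (isGreatest_norm_spectrum_map_of_mulVec_eq_smul (pow_apply_nonneg hA r) hv hperiod), ha]

/-- part of Corollary 2 of the paper, cyclic case.
Let `A` be an `n × n` irreducible matrix with nonnegative integer entries and all row sums
nonzero, let `r ≥ 1`, `k ≥ 0`, and let `m : {1,…,n} → ℤ/rℤ` satisfy
`a_{ij} > 0 → m(j) = m(i) + 1`. If positive constants `c_1,…,c_r` satisfy
`r_i(A^{k+1})/r_i(A^k) = c_{m(i)}` for all `i`, then `ρ(A)^r` is a nonnegative integer. -/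
theorem stmt17 {n r : ℕ} (A : Matrix (Fin n) (Fin n) ℝ)
    (hint : ∀ i j, ∃ z : ℕ, A i j = (z : ℝ)) (hirr : IsIrred A)
    (hr : ∀ i, rowSum A i ≠ 0) (hr1 : 1 ≤ r) (k : ℕ)
    (m : Fin n → ZMod r) (hpart : ∀ i j, 0 < A i j → m j = m i + 1)
    (c : ZMod r → ℝ) (hc : ∀ ℓ : ZMod r, 0 < c ℓ)
    (hratio : ∀ i : Fin n, rowSum (A ^ (k + 1)) i / rowSum (A ^ k) i = c (m i)) :
    ∃ z : ℕ, specRad A ^ r = (z : ℝ) :=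
  stmt17_general A hint hr hr1 k m hpart c hratio
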